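/- Let f : ℝ → ℝ be continuous with |f(t)| ≤ C₀(|t| + |t|^{2*_α−1}) for all t and some constant C₀ > 0, and let k : ℝ^N → ℝ be measurable and bounded. Let {u_n} be a sequence bounded in L²(ℝ^N) ∩ L^{2*_α}(ℝ^N) with u_n(x) → u₀(x) for almost every x ∈ ℝ^N, where u₀ ∈ L²(ℝ^N) ∩ L^{2*_α}(ℝ^N). Then for every φ ∈ L²(ℝ^N) ∩ L^{2*_α}(ℝ^N): ∫_{ℝ^N} k(x)f(u_n)φ dx → ∫_{ℝ^N} k(x)f(u₀)φ dx as n → ∞. -/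

import Mathlib

open MeasureTheory Filter Topology Metric Real
open scoped ENNReal

noncomputable section

/-- Euclidean space `ℝ^N`. -/
abbrev EN (N : ℕ) := EuclideanSpace ℝ (Fin N)

/-- The critical fractional Sobolev exponent `2*_α = 2N/(N-2α)`. -/
def critExp (N : ℕ) (α : ℝ) : ℝ := 2 * N / (N - 2 * α)

/-!
By the growth condition and Hölder's inequality (with exponents `(2, 2)` and
`(2*_α / (2*_α - 1), 2*_α)`), the `L¹` norm of `k f(u_n) φ` on a measurable set `s` is bounded,
uniformly in `n`, by a constant times `‖1_s φ‖₂ + ‖1_s φ‖_{2*_α}`. As `φ ∈ L² ∩ L^{2*_α}`, the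
family `k f(u_n) φ` is therefore uniformly integrable and uniformly tight; it converges a.e. to
`k f(u₀) φ` by continuity of `f`, so Vitali's convergence theorem gives `L¹` convergence.
-/

lemma one_lt_critExp {N : ℕ} {α : ℝ} (hN : 2 ≤ N) (hα : α ∈ Set.Ioo (0 : ℝ) 1) :
    1 < critExp N α := by
  obtain ⟨hα₀, hα₁⟩ := hα
  have hN' : (2 : ℝ) ≤ N := by exact_mod_cast hN
  rw [critExp, lt_div_iff₀ (by linarith)]
  linarith

lemma ENNReal.exists_pos_forall_mul_add_mul_le {A B : ℝ≥0∞} (hA : A ≠ ∞) (hB : B ≠ ∞) {ε : ℝ}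
    (hε : 0 < ε) :
    ∃ η : ℝ, 0 < η ∧ ∀ X Y, X ≤ .ofReal η → Y ≤ .ofReal η → A * X + B * Y ≤ .ofReal ε := by
  set K := A.toReal + B.toReal + 1
  have hK : 0 < K := by positivity
  refine ⟨ε / K, by positivity, fun X Y hX hY => ?_⟩
  calc A * X + B * Y ≤ .ofReal A.toReal * .ofReal (ε / K) + .ofReal B.toReal * .ofReal (ε / K) := by
        rw [ENNReal.ofReal_toReal hA, ENNReal.ofReal_toReal hB]; gcongr
    _ = .ofReal ((A.toReal + B.toReal) * (ε / K)) := by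
        rw [← ENNReal.ofReal_mul (by positivity), ← ENNReal.ofReal_mul (by positivity),
          ← ENNReal.ofReal_add (by positivity) (by positivity), add_mul]
    _ ≤ .ofReal ε := by
        refine ENNReal.ofReal_le_ofReal ?_
        rw [mul_div_assoc', div_le_iff₀ hK]
        nlinarith

namespace MeasureTheory

variable {α : Type*} [MeasurableSpace α] {μ : Measure α}

theorem eLpNorm_abs_rpow_mul_le {p : ℝ} (hp : 1 < p) {v ψ : α → ℝ}
    (hv : AEStronglyMeasurable v μ) (hψ : AEStronglyMeasurable ψ μ) :
    eLpNorm (fun x => |v x| ^ (p - 1) * ψ x) 1 μ ≤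
      eLpNorm v (.ofReal p) μ ^ (p - 1) * eLpNorm ψ (.ofReal p) μ := by
  have hp₁ : 0 < p - 1 := by linarith
  have := (Real.HolderConjugate.conjExponent hp).symm.ennrealOfReal
  calc eLpNorm (fun x => |v x| ^ (p - 1) * ψ x) 1 μ
      ≤ eLpNorm (fun x => ‖v x‖ ^ (p - 1)) (.ofReal p.conjExponent) μ *
          eLpNorm ψ (.ofReal p) μ := by
        simpa using eLpNorm_le_eLpNorm_mul_eLpNorm'_of_norm
          (hv.norm.aemeasurable.pow_const _).aestronglyMeasurable hψ (· * ·) 1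
          (.of_forall fun x => by simp)
    _ = eLpNorm v (.ofReal p) μ ^ (p - 1) * eLpNorm ψ (.ofReal p) μ := by
        rw [eLpNorm_norm_rpow v hp₁, Real.conjExponent, ← ENNReal.ofReal_mul (by positivity),
          div_mul_cancel₀ _ hp₁.ne']

theorem eLpNorm_mul_comp_mul_le {p M C : ℝ} (hp : 1 < p) {f : ℝ → ℝ}
    (hf : ∀ t, |f t| ≤ C * (|t| + |t| ^ (p - 1))) {k v ψ : α → ℝ} (hk : ∀ᵐ x ∂μ, |k x| ≤ M)
    (hv : AEStronglyMeasurable v μ) (hψ : AEStronglyMeasurable ψ μ) :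
    eLpNorm (fun x => k x * f (v x) * ψ x) 1 μ ≤ ‖M * C‖ₑ * (eLpNorm v 2 μ * eLpNorm ψ 2 μ +
      eLpNorm v (.ofReal p) μ ^ (p - 1) * eLpNorm ψ (.ofReal p) μ) := by
  set g₂ := fun x => |v x| * ψ x
  set gₚ := fun x => |v x| ^ (p - 1) * ψ x
  -- `g₂ x` and `gₚ x` both have the sign of `ψ x`, so the norm of their sum does not cancel.
  have hpt : ∀ᵐ x ∂μ, ‖k x * f (v x) * ψ x‖ ≤ ‖((M * C) • (g₂ + gₚ)) x‖ := by
    filter_upwards [hk] with x hkx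
    have hC : |f (v x)| ≤ |C| * (|v x| + |v x| ^ (p - 1)) :=
      (hf _).trans (mul_le_mul_of_nonneg_right (le_abs_self C) (by positivity))
    have hM : |k x| ≤ |M| := hkx.trans (le_abs_self M)
    simp only [g₂, gₚ, Pi.smul_apply, Pi.add_apply, smul_eq_mul, Real.norm_eq_abs, ← add_mul,
      abs_mul, abs_of_nonneg (by positivity : 0 ≤ |v x| + |v x| ^ (p - 1))]
    calc |k x| * |f (v x)| * |ψ x| ≤ |M| * (|C| * (|v x| + |v x| ^ (p - 1))) * |ψ x| := by gcongr
      _ = _ := by ring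
  calc eLpNorm (fun x => k x * f (v x) * ψ x) 1 μ ≤ eLpNorm ((M * C) • (g₂ + gₚ)) 1 μ :=
        eLpNorm_mono_ae hpt
    _ ≤ ‖M * C‖ₑ * (eLpNorm g₂ 1 μ + eLpNorm gₚ 1 μ) := by
        rw [eLpNorm_const_smul]
        gcongr
        exact eLpNorm_add_le (hv.norm.mul hψ)
          ((hv.norm.aemeasurable.pow_const _).aestronglyMeasurable.mul hψ) le_rfl
    _ ≤ _ := by
        gcongr
        · have h₂ := eLpNorm_abs_rpow_mul_le (μ := μ) one_lt_two hv hψ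
          norm_num at h₂
          exact h₂
        · exact eLpNorm_abs_rpow_mul_le hp hv hψ

theorem integrable_mul_comp_mul {p M C : ℝ} (hp : 1 < p) {f : ℝ → ℝ} (hfc : Continuous f)
    (hf : ∀ t, |f t| ≤ C * (|t| + |t| ^ (p - 1))) {k v ψ : α → ℝ}
    (hkm : AEStronglyMeasurable k μ) (hk : ∀ᵐ x ∂μ, |k x| ≤ M)
    (hv₂ : MemLp v 2 μ) (hvₚ : MemLp v (.ofReal p) μ) (hψ₂ : MemLp ψ 2 μ)
    (hψₚ : MemLp ψ (.ofReal p) μ) :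
    Integrable (fun x => k x * f (v x) * ψ x) μ := by
  refine ⟨(hkm.mul (hfc.comp_aestronglyMeasurable hv₂.1)).mul hψ₂.1, ?_⟩
  rw [hasFiniteIntegral_iff_enorm, ← eLpNorm_one_eq_lintegral_enorm]
  refine (eLpNorm_mul_comp_mul_le hp hf hk hv₂.1 hψ₂.1).trans_lt ?_
  finiteness [hv₂.eLpNorm_lt_top, hvₚ.eLpNorm_lt_top, hψ₂.eLpNorm_lt_top, hψₚ.eLpNorm_lt_top]

theorem eLpNorm_indicator_mul_comp_mul_le {p M C R : ℝ} (hp : 1 < p) {f : ℝ → ℝ}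
    (hf : ∀ t, |f t| ≤ C * (|t| + |t| ^ (p - 1))) {k v φ : α → ℝ} (hk : ∀ᵐ x ∂μ, |k x| ≤ M)
    (hv : AEStronglyMeasurable v μ) (hv₂ : eLpNorm v 2 μ ≤ .ofReal R)
    (hvₚ : eLpNorm v (.ofReal p) μ ≤ .ofReal R) (hφ : AEStronglyMeasurable φ μ)
    {s : Set α} (hs : MeasurableSet s) :
    eLpNorm (s.indicator fun x => k x * f (v x) * φ x) 1 μ ≤
      ‖M * C‖ₑ * .ofReal R * eLpNorm (s.indicator φ) 2 μ +
        ‖M * C‖ₑ * .ofReal R ^ (p - 1) * eLpNorm (s.indicator φ) (.ofReal p) μ := by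
  have hind : (s.indicator fun x => k x * f (v x) * φ x) =
      fun x => k x * f (v x) * s.indicator φ x :=
    funext fun x => Set.indicator_mul_right _ _ _
  rw [hind, mul_assoc, mul_assoc, ← mul_add]
  refine (eLpNorm_mul_comp_mul_le hp hf hk hv (hφ.indicator hs)).trans ?_
  gcongr

section UniformControl

variable {ι F G H : Type*} [NormedAddCommGroup F] [NormedAddCommGroup G] [NormedAddCommGroup H]
  {g : ι → α → F} {φ : α → G} {ψ : α → H} {p q r : ℝ≥0∞} {A B : ℝ≥0∞}

theorem unifIntegrable_of_eLpNorm_indicator_le (hp : 1 ≤ p) (hp' : p ≠ ∞) (hq : 1 ≤ q)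
    (hq' : q ≠ ∞) (hA : A ≠ ∞) (hB : B ≠ ∞) (hφ : MemLp φ p μ) (hψ : MemLp ψ q μ)
    (hg : ∀ i s, MeasurableSet s → eLpNorm (s.indicator (g i)) r μ ≤
      A * eLpNorm (s.indicator φ) p μ + B * eLpNorm (s.indicator ψ) q μ) :
    UnifIntegrable g r μ := by
  intro ε hε
  obtain ⟨η, hη, hsmall⟩ := ENNReal.exists_pos_forall_mul_add_mul_le hA hB hε
  obtain ⟨δφ, hδφ, hφδ⟩ := hφ.eLpNorm_indicator_le hp hp' hη
  obtain ⟨δψ, hδψ, hψδ⟩ := hψ.eLpNorm_indicator_le hq hq' hη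
  refine ⟨min δφ δψ, lt_min hδφ hδψ, fun i s hs hμs => (hg i s hs).trans (hsmall _ _ ?_ ?_)⟩
  · exact hφδ s hs (hμs.trans (ENNReal.ofReal_le_ofReal (min_le_left _ _)))
  · exact hψδ s hs (hμs.trans (ENNReal.ofReal_le_ofReal (min_le_right _ _)))

theorem unifTight_of_eLpNorm_indicator_le (hp' : p ≠ ∞) (hq' : q ≠ ∞) (hA : A ≠ ∞) (hB : B ≠ ∞)
    (hφ : MemLp φ p μ) (hψ : MemLp ψ q μ)
    (hg : ∀ i s, MeasurableSet s → eLpNorm (s.indicator (g i)) r μ ≤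
      A * eLpNorm (s.indicator φ) p μ + B * eLpNorm (s.indicator ψ) q μ) :
    UnifTight g r μ := by
  rw [unifTight_iff_real]
  intro ε hε
  obtain ⟨η, hη, hsmall⟩ := ENNReal.exists_pos_forall_mul_add_mul_le hA hB hε
  have hη' : ENNReal.ofReal η ≠ 0 := (ENNReal.ofReal_pos.2 hη).ne'
  obtain ⟨sφ, hsφ, hμsφ, hφs⟩ := hφ.exists_eLpNorm_indicator_compl_lt hp' hη'
  obtain ⟨sψ, hsψ, hμsψ, hψs⟩ := hψ.exists_eLpNorm_indicator_compl_lt hq' hη'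
  refine ⟨sφ ∪ sψ, by finiteness, fun i => (hg i _ (hsφ.union hsψ).compl).trans (hsmall _ _ ?_ ?_)⟩
  · rw [Set.compl_union, Set.inter_comm, ← Set.indicator_indicator]
    exact (eLpNorm_indicator_le _).trans hφs.le
  · rw [Set.compl_union, ← Set.indicator_indicator]
    exact (eLpNorm_indicator_le _).trans hψs.le

end UniformControl

theorem tendsto_integral_of_tendsto_ae_of_unifIntegrable {E : Type*} [NormedAddCommGroup E]
    [NormedSpace ℝ E] {F : ℕ → α → E} {f : α → E} (hF : ∀ n, Integrable (F n) μ)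
    (hf : Integrable f μ) (hui : UnifIntegrable F 1 μ) (hut : UnifTight F 1 μ)
    (hae : ∀ᵐ x ∂μ, Tendsto (fun n => F n x) atTop (𝓝 (f x))) :
    Tendsto (fun n => ∫ x, F n x ∂μ) atTop (𝓝 (∫ x, f x ∂μ)) :=
  tendsto_integral_of_L1' f hf.1 (.of_forall hF) <|
    tendsto_Lp_of_tendsto_ae le_rfl ENNReal.one_ne_top (fun n => (hF n).1)
      (memLp_one_iff_integrable.2 hf) hui hut hae

end MeasureTheory

theorem convergence_nonlinear_term_general
    (N : ℕ) (hN : 2 ≤ N) (α : ℝ) (hα : α ∈ Set.Ioo (0:ℝ) 1)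
    (f : ℝ → ℝ) (hf_cont : Continuous f)
    (C₀ : ℝ)
    (hf_growth : ∀ t : ℝ, |f t| ≤ C₀ * (|t| + |t| ^ (critExp N α - 1)))
    (k : EN N → ℝ) (hk_meas : Measurable k) (hk_bd : ∃ M : ℝ, ∀ x : EN N, |k x| ≤ M)
    (u : ℕ → EN N → ℝ) (u₀ : EN N → ℝ)
    (hu_L2 : ∀ n, MemLp (u n) 2 (volume : Measure (EN N)))
    (hu_Lc : ∀ n, MemLp (u n) (ENNReal.ofReal (critExp N α)) (volume : Measure (EN N)))
    (hu_bd : ∃ M : ℝ, ∀ n,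
      eLpNorm (u n) 2 (volume : Measure (EN N)) ≤ ENNReal.ofReal M ∧
      eLpNorm (u n) (ENNReal.ofReal (critExp N α)) (volume : Measure (EN N)) ≤ ENNReal.ofReal M)
    (hu_ae : ∀ᵐ x : EN N, Tendsto (fun n => u n x) atTop (𝓝 (u₀ x)))
    (hu₀_L2 : MemLp u₀ 2 (volume : Measure (EN N)))
    (hu₀_Lc : MemLp u₀ (ENNReal.ofReal (critExp N α)) (volume : Measure (EN N)))
    (φ : EN N → ℝ)
    (hφ_L2 : MemLp φ 2 (volume : Measure (EN N)))
    (hφ_Lc : MemLp φ (ENNReal.ofReal (critExp N α)) (volume : Measure (EN N))) :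
    Tendsto (fun n => ∫ x, k x * f (u n x) * φ x) atTop
      (𝓝 (∫ x, k x * f (u₀ x) * φ x)) := by
  have hc := one_lt_critExp hN hα
  have hc' : 1 ≤ ENNReal.ofReal (critExp N α) := by
    simpa using ENNReal.ofReal_le_ofReal hc.le
  obtain ⟨M, hM⟩ := hk_bd
  have hk : ∀ᵐ x ∂(volume : Measure (EN N)), |k x| ≤ M := .of_forall hM
  obtain ⟨R, hR⟩ := hu_bd
  have hgi := fun v (hv₂ : MemLp v 2 volume) hvc => integrable_mul_comp_mul hc hf_cont hf_growth
    hk_meas.aestronglyMeasurable hk hv₂ hvc hφ_L2 hφ_Lc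
  have hcontrol := fun n s (hs : MeasurableSet s) => eLpNorm_indicator_mul_comp_mul_le hc hf_growth
    hk (hu_L2 n).1 (hR n).1 (hR n).2 hφ_L2.1 hs
  refine tendsto_integral_of_tendsto_ae_of_unifIntegrable (fun n => hgi _ (hu_L2 n) (hu_Lc n))
    (hgi _ hu₀_L2 hu₀_Lc)
    (unifIntegrable_of_eLpNorm_indicator_le one_le_two ENNReal.ofNat_ne_top hc'
      ENNReal.ofReal_ne_top (by finiteness) (by finiteness) hφ_L2 hφ_Lc hcontrol)
    (unifTight_of_eLpNorm_indicator_le ENNReal.ofNat_ne_top ENNReal.ofReal_ne_top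
      (by finiteness) (by finiteness) hφ_L2 hφ_Lc hcontrol) ?_
  filter_upwards [hu_ae] with x hx
  exact (((hf_cont.tendsto _).comp hx).const_mul _).mul_const _

/-- Convergence of `∫ k f(u_n) φ` to `∫ k f(u₀) φ` for sequences bounded in
`L² ∩ L^{2*_α}` converging a.e. -/
theorem convergence_nonlinear_term
    (N : ℕ) (hN : 2 ≤ N) (α : ℝ) (hα : α ∈ Set.Ioo (0:ℝ) 1)
    (f : ℝ → ℝ) (hf_cont : Continuous f)
    (C₀ : ℝ) (hC₀ : 0 < C₀)
    (hf_growth : ∀ t : ℝ, |f t| ≤ C₀ * (|t| + |t| ^ (critExp N α - 1)))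
    (k : EN N → ℝ) (hk_meas : Measurable k) (hk_bd : ∃ M : ℝ, ∀ x : EN N, |k x| ≤ M)
    (u : ℕ → EN N → ℝ) (u₀ : EN N → ℝ)
    (hu_L2 : ∀ n, MemLp (u n) 2 (volume : Measure (EN N)))
    (hu_Lc : ∀ n, MemLp (u n) (ENNReal.ofReal (critExp N α)) (volume : Measure (EN N)))
    (hu_bd : ∃ M : ℝ, ∀ n,
      eLpNorm (u n) 2 (volume : Measure (EN N)) ≤ ENNReal.ofReal M ∧
      eLpNorm (u n) (ENNReal.ofReal (critExp N α)) (volume : Measure (EN N)) ≤ ENNReal.ofReal M)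
    (hu_ae : ∀ᵐ x : EN N, Tendsto (fun n => u n x) atTop (𝓝 (u₀ x)))
    (hu₀_L2 : MemLp u₀ 2 (volume : Measure (EN N)))
    (hu₀_Lc : MemLp u₀ (ENNReal.ofReal (critExp N α)) (volume : Measure (EN N)))
    (φ : EN N → ℝ)
    (hφ_L2 : MemLp φ 2 (volume : Measure (EN N)))
    (hφ_Lc : MemLp φ (ENNReal.ofReal (critExp N α)) (volume : Measure (EN N))) :
    Tendsto (fun n => ∫ x, k x * f (u n x) * φ x) atTop
      (𝓝 (∫ x, k x * f (u₀ x) * φ x)) :=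
  convergence_nonlinear_term_general N hN α hα f hf_cont C₀ hf_growth k hk_meas hk_bd u u₀ hu_L2
    hu_Lc hu_bd hu_ae hu₀_L2 hu₀_Lc φ hφ_L2 hφ_Lc
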